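/- arXiv:2111.10977 — 6 statements merged into one kernel-verified Lean document; each statement's English description precedes it below -/
import Mathlib

section
/- Let f, g : (0,∞) → ℝ be positive integrable functions such that f/g is non-increasing. Then the function r ↦ (∫₀ʳ f(t) dt) / (∫₀ʳ g(t) dt) is also non-increasing on (0,∞). -/
open Real MeasureTheory Set

/-!
Put `c = f r / g r`. Since `f/g` is non-increasing, `f ≥ c g` on `(0, r]` and `f ≤ c g` on
`[r, R]`. Integrating, `∫₀ʳ f ≥ c ∫₀ʳ g` and `∫ᵣᴿ f ≤ c ∫ᵣᴿ g`, so the mass added between `r`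
and `R` has ratio at most `c`, which is itself at most the ratio of the masses on `[0, r]`.
-/

theorem add_div_add_le_div {K : Type*} [Field K] [LinearOrder K] [IsStrictOrderedRing K]
    {A B a b c : K} (hB : 0 < B) (hb : 0 ≤ b) (ha : a ≤ c * b) (hA : c * B ≤ A) :
    (A + a) / (B + b) ≤ A / B := by
  rw [div_le_div_iff₀ (add_pos_of_pos_of_nonneg hB hb) hB]
  nlinarith [mul_le_mul_of_nonneg_right ha hB.le, mul_le_mul_of_nonneg_right hA hb]

namespace intervalIntegral

variable {f g : ℝ → ℝ} {a b c : ℝ}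

theorem integral_le_const_mul_integral_of_div_le (hab : a ≤ b)
    (hf : IntervalIntegrable f volume a b) (hg : IntervalIntegrable g volume a b)
    (hg_pos : ∀ x ∈ Ioo a b, 0 < g x) (h : ∀ x ∈ Ioo a b, f x / g x ≤ c) :
    ∫ x in a..b, f x ≤ c * ∫ x in a..b, g x := by
  rw [← integral_const_mul]
  exact integral_mono_on_of_le_Ioo hab hf (hg.const_mul c) fun x hx ↦
    (div_le_iff₀ (hg_pos x hx)).1 (h x hx)

theorem const_mul_integral_le_integral_of_le_div (hab : a ≤ b)
    (hf : IntervalIntegrable f volume a b) (hg : IntervalIntegrable g volume a b)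
    (hg_pos : ∀ x ∈ Ioo a b, 0 < g x) (h : ∀ x ∈ Ioo a b, c ≤ f x / g x) :
    c * ∫ x in a..b, g x ≤ ∫ x in a..b, f x := by
  rw [← integral_const_mul]
  exact integral_mono_on_of_le_Ioo hab (hg.const_mul c) hf fun x hx ↦
    (le_div_iff₀ (hg_pos x hx)).1 (h x hx)

end intervalIntegral

open intervalIntegral in
theorem stmt_0_general (f g : ℝ → ℝ)
    (hg_pos : ∀ t, 0 < t → 0 < g t)
    (hf_int : ∀ r, 0 < r → IntervalIntegrable f volume 0 r)
    (hg_int : ∀ r, 0 < r → IntervalIntegrable g volume 0 r)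
    (hratio : ∀ r R, 0 < r → r ≤ R → f R / g R ≤ f r / g r) :
    ∀ r R, 0 < r → r ≤ R →
      (∫ t in (0:ℝ)..R, f t) / (∫ t in (0:ℝ)..R, g t) ≤
      (∫ t in (0:ℝ)..r, f t) / (∫ t in (0:ℝ)..r, g t) := by
  intro r R hr hrR
  have hR : 0 < R := hr.trans_le hrR
  have hf_tail : IntervalIntegrable f volume r R := (hf_int r hr).symm.trans (hf_int R hR)
  have hg_tail : IntervalIntegrable g volume r R := (hg_int r hr).symm.trans (hg_int R hR)
  have head : f r / g r * ∫ t in (0:ℝ)..r, g t ≤ ∫ t in (0:ℝ)..r, f t :=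
    const_mul_integral_le_integral_of_le_div hr.le (hf_int r hr) (hg_int r hr)
      (fun t ht ↦ hg_pos t ht.1) fun t ht ↦ hratio t r ht.1 ht.2.le
  have tail : ∫ t in r..R, f t ≤ f r / g r * ∫ t in r..R, g t :=
    integral_le_const_mul_integral_of_div_le hrR hf_tail hg_tail
      (fun t ht ↦ hg_pos t (hr.trans ht.1)) fun t ht ↦ hratio r t hr ht.1.le
  rw [← integral_add_adjacent_intervals (hf_int r hr) hf_tail,
    ← integral_add_adjacent_intervals (hg_int r hr) hg_tail]
  exact add_div_add_le_div
    (intervalIntegral_pos_of_pos_on (hg_int r hr) (fun t ht ↦ hg_pos t ht.1) hr)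
    (integral_nonneg hrR fun t ht ↦ (hg_pos t (hr.trans_le ht.1)).le) tail head

/-- Gromov's lemma: if `f/g` is non-increasing on `(0,∞)` for positive integrable `f, g`,
then `r ↦ (∫₀ʳ f) / (∫₀ʳ g)` is non-increasing on `(0,∞)`. -/
theorem stmt_0 (f g : ℝ → ℝ)
    (hf_pos : ∀ t, 0 < t → 0 < f t) (hg_pos : ∀ t, 0 < t → 0 < g t)
    (hf_int : ∀ r, 0 < r → IntervalIntegrable f volume 0 r)
    (hg_int : ∀ r, 0 < r → IntervalIntegrable g volume 0 r)
    (hratio : ∀ r R, 0 < r → r ≤ R → f R / g R ≤ f r / g r) :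
    ∀ r R, 0 < r → r ≤ R →
      (∫ t in (0:ℝ)..R, f t) / (∫ t in (0:ℝ)..R, g t) ≤
      (∫ t in (0:ℝ)..r, f t) / (∫ t in (0:ℝ)..r, g t) :=
  stmt_0_general f g hg_pos hf_int hg_int hratio
end

section
/- Let κ ∈ ℝ and let T > 0 with T ≤ π/√κ if κ > 0. Suppose h : [0,T) → ℝ is twice continuously differentiable with h(0) = 0, h > 0 on (0,T), h''(t) + κ h(t) ≤ 0 on (0,T), and lim_{t→0⁺} h'(t) s_κ(t) = 0. Then the function t ↦ h(t)/s_κ(t) is non-increasing on (0,T), where s_κ solves f'' + κ f = 0, f(0)=0, f'(0)=1. -/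
open Real MeasureTheory Set

/-- The comparison function `s_κ`: solution of `f'' + κ f = 0`, `f 0 = 0`, `f' 0 = 1`. -/
noncomputable def sk (κ t : ℝ) : ℝ :=
  if 0 < κ then Real.sin (Real.sqrt κ * t) / Real.sqrt κ
  else if κ = 0 then t
  else Real.sinh (Real.sqrt (-κ) * t) / Real.sqrt (-κ)

noncomputable def ck (κ t : ℝ) : ℝ :=
  if 0 < κ then Real.cos (Real.sqrt κ * t)
  else if κ = 0 then 1
  else Real.cosh (Real.sqrt (-κ) * t)

lemma hasDerivAt_sk (κ t : ℝ) : HasDerivAt (sk κ) (ck κ t) t := by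
  rcases lt_trichotomy 0 κ with hκ | hκ | hκ
  · have hs : Real.sqrt κ ≠ 0 := by positivity
    have hfun : sk κ = fun t => Real.sin (Real.sqrt κ * t) / Real.sqrt κ :=
      funext fun x => by simp [sk, hκ]
    have hck : ck κ t = Real.cos (Real.sqrt κ * t) := by simp [ck, hκ]
    rw [hfun, hck]
    have H : HasDerivAt (fun t => Real.sin (Real.sqrt κ * t) / Real.sqrt κ)
        (Real.cos (Real.sqrt κ * t) * Real.sqrt κ / Real.sqrt κ) t := by
      simpa using ((Real.hasDerivAt_sin _).comp t
        ((hasDerivAt_id t).const_mul (Real.sqrt κ))).div_const (Real.sqrt κ)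
    rwa [mul_div_assoc, div_self hs, mul_one] at H
  · have hfun : sk κ = fun t => t := funext fun x => by simp [sk, ← hκ]
    have hck : ck κ t = 1 := by simp [ck, ← hκ]
    rw [hfun, hck]; exact hasDerivAt_id t
  · have hκ' : ¬ (0 < κ) := not_lt.2 hκ.le
    have hnegκ : (0:ℝ) < -κ := by linarith
    have hs : Real.sqrt (-κ) ≠ 0 := by positivity
    have hfun : sk κ = fun t => Real.sinh (Real.sqrt (-κ) * t) / Real.sqrt (-κ) :=
      funext fun x => by simp [sk, hκ', hκ.ne]
    have hck : ck κ t = Real.cosh (Real.sqrt (-κ) * t) := by simp [ck, hκ', hκ.ne]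
    rw [hfun, hck]
    have H : HasDerivAt (fun t => Real.sinh (Real.sqrt (-κ) * t) / Real.sqrt (-κ))
        (Real.cosh (Real.sqrt (-κ) * t) * Real.sqrt (-κ) / Real.sqrt (-κ)) t := by
      simpa using ((Real.hasDerivAt_sinh _).comp t
        ((hasDerivAt_id t).const_mul (Real.sqrt (-κ)))).div_const (Real.sqrt (-κ))
    rwa [mul_div_assoc, div_self hs, mul_one] at H

lemma hasDerivAt_ck (κ t : ℝ) : HasDerivAt (ck κ) (-(κ * sk κ t)) t := by
  rcases lt_trichotomy 0 κ with hκ | hκ | hκ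
  · have hsq : Real.sqrt κ * Real.sqrt κ = κ := Real.mul_self_sqrt hκ.le
    have hs : Real.sqrt κ ≠ 0 := by positivity
    have hfun : ck κ = fun t => Real.cos (Real.sqrt κ * t) :=
      funext fun x => by simp [ck, hκ]
    have hsk : sk κ t = Real.sin (Real.sqrt κ * t) / Real.sqrt κ := by simp [sk, hκ]
    rw [hfun, hsk]
    have H : HasDerivAt (fun t => Real.cos (Real.sqrt κ * t))
        (-Real.sin (Real.sqrt κ * t) * Real.sqrt κ) t := by
      simpa [Function.comp_def] using ((Real.hasDerivAt_cos _).comp t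
        ((hasDerivAt_id t).const_mul (Real.sqrt κ)))
    have e : -Real.sin (Real.sqrt κ * t) * Real.sqrt κ
        = -(κ * (Real.sin (Real.sqrt κ * t) / Real.sqrt κ)) := by
      field_simp
      linear_combination -Real.sin (Real.sqrt κ * t) * hsq
    rwa [e] at H
  · have hfun : ck κ = fun _ => (1:ℝ) := funext fun x => by simp [ck, ← hκ]
    rw [hfun, ← hκ]
    simpa using hasDerivAt_const t (1:ℝ)
  · have hκ' : ¬ (0 < κ) := not_lt.2 hκ.le
    have hnegκ : (0:ℝ) < -κ := by linarith
    have hsq : Real.sqrt (-κ) * Real.sqrt (-κ) = -κ := Real.mul_self_sqrt hnegκ.le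
    have hs : Real.sqrt (-κ) ≠ 0 := by positivity
    have hfun : ck κ = fun t => Real.cosh (Real.sqrt (-κ) * t) :=
      funext fun x => by simp [ck, hκ', hκ.ne]
    have hsk : sk κ t = Real.sinh (Real.sqrt (-κ) * t) / Real.sqrt (-κ) := by
      simp [sk, hκ', hκ.ne]
    rw [hfun, hsk]
    have H : HasDerivAt (fun t => Real.cosh (Real.sqrt (-κ) * t))
        (Real.sinh (Real.sqrt (-κ) * t) * Real.sqrt (-κ)) t := by
      simpa [Function.comp_def] using ((Real.hasDerivAt_cosh _).comp t
        ((hasDerivAt_id t).const_mul (Real.sqrt (-κ))))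
    have e : Real.sinh (Real.sqrt (-κ) * t) * Real.sqrt (-κ)
        = -(κ * (Real.sinh (Real.sqrt (-κ) * t) / Real.sqrt (-κ))) := by
      field_simp
      linear_combination Real.sinh (Real.sqrt (-κ) * t) * hsq
    rwa [e] at H

lemma sk_pos {κ T : ℝ} (hTκ : 0 < κ → T ≤ Real.pi / Real.sqrt κ)
    {t : ℝ} (ht : t ∈ Set.Ioo 0 T) : 0 < sk κ t := by
  obtain ⟨ht0, htT⟩ := ht
  rcases lt_trichotomy 0 κ with hκ | hκ | hκ
  · have hs : (0:ℝ) < Real.sqrt κ := Real.sqrt_pos.2 hκ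
    have h1 : 0 < Real.sqrt κ * t := by positivity
    have h2 : Real.sqrt κ * t < Real.pi := by
      have hh := hTκ hκ
      calc Real.sqrt κ * t < Real.sqrt κ * T := by nlinarith
        _ ≤ Real.sqrt κ * (Real.pi / Real.sqrt κ) := by nlinarith
        _ = Real.pi := by field_simp
    have := Real.sin_pos_of_pos_of_lt_pi h1 h2
    simp only [sk, if_pos hκ]
    positivity
  · simp [sk, ← hκ, ht0]
  · have hκ' : ¬ (0 < κ) := not_lt.2 hκ.le
    have hnegκ : (0:ℝ) < -κ := by linarith
    have hs : (0:ℝ) < Real.sqrt (-κ) := Real.sqrt_pos.2 hnegκ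
    have h1 : 0 < Real.sinh (Real.sqrt (-κ) * t) := Real.sinh_pos_iff.2 (by positivity)
    simp only [sk, if_neg hκ', if_neg hκ.ne]
    positivity

/-- Sturm comparison step: if `h'' + κ h ≤ 0`, `h(0) = 0`, `h > 0` on `(0,T)` and
`h' · s_κ → 0` at `0⁺`, then `h / s_κ` is non-increasing on `(0,T)`. -/
theorem stmt_2 (κ T : ℝ) (hT : 0 < T) (hTκ : 0 < κ → T ≤ Real.pi / Real.sqrt κ)
    (h : ℝ → ℝ) (hC2 : ContDiffOn ℝ 2 h (Set.Ico 0 T))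
    (h0 : h 0 = 0) (hpos : ∀ t ∈ Set.Ioo 0 T, 0 < h t)
    (hineq : ∀ t ∈ Set.Ioo 0 T, deriv (deriv h) t + κ * h t ≤ 0)
    (hlim : Filter.Tendsto (fun t => deriv h t * sk κ t)
      (nhdsWithin 0 (Set.Ioi 0)) (nhds 0)) :
    AntitoneOn (fun t => h t / sk κ t) (Set.Ioo 0 T) := by
  have hIoo : Set.Ioo 0 T ⊆ Set.Ico 0 T := Set.Ioo_subset_Ico_self
  have hC2' : ContDiffOn ℝ 2 h (Set.Ioo 0 T) := hC2.mono hIoo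
  have hopen : IsOpen (Set.Ioo (0:ℝ) T) := isOpen_Ioo
  have hdh : ∀ t ∈ Set.Ioo 0 T, HasDerivAt h (deriv h t) t := fun t ht =>
    ((hC2'.differentiableOn (by norm_num)).differentiableAt (hopen.mem_nhds ht)).hasDerivAt
  have hC1d : ContDiffOn ℝ 1 (deriv h) (Set.Ioo 0 T) :=
    hC2'.deriv_of_isOpen hopen le_rfl
  have hddh : ∀ t ∈ Set.Ioo 0 T, HasDerivAt (deriv h) (deriv (deriv h) t) t := fun t ht =>
    ((hC1d.differentiableOn one_ne_zero).differentiableAt (hopen.mem_nhds ht)).hasDerivAt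
  set W : ℝ → ℝ := fun t => deriv h t * sk κ t - h t * ck κ t with hWdef
  have hWderiv : ∀ t ∈ Set.Ioo 0 T,
      HasDerivAt W ((deriv (deriv h) t + κ * h t) * sk κ t) t := by
    intro t ht
    have H := ((hddh t ht).mul (hasDerivAt_sk κ t)).sub ((hdh t ht).mul (hasDerivAt_ck κ t))
    exact H.congr_deriv (by ring)
  have hWanti : AntitoneOn W (Set.Ioo 0 T) := by
    apply antitoneOn_of_deriv_nonpos (convex_Ioo 0 T)
    · exact fun t ht => (hWderiv t ht).continuousAt.continuousWithinAt
    · rw [interior_Ioo]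
      exact fun t ht => ((hWderiv t ht).differentiableAt).differentiableWithinAt
    · intro t ht
      rw [interior_Ioo] at ht
      rw [(hWderiv t ht).deriv]
      exact mul_nonpos_of_nonpos_of_nonneg (hineq t ht) (sk_pos hTκ ht).le
  have hh0 : Filter.Tendsto h (nhdsWithin 0 (Set.Ioi 0)) (nhds 0) := by
    have hc : ContinuousWithinAt h (Set.Ioo 0 T) 0 :=
      (hC2.continuousOn 0 ⟨le_rfl, hT⟩).mono hIoo
    have := hc.tendsto
    rw [h0, nhdsWithin_Ioo_eq_nhdsGT hT] at this
    exact this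
  have hck0 : Filter.Tendsto (fun t => ck κ t) (nhdsWithin 0 (Set.Ioi 0)) (nhds (ck κ 0)) :=
    ((hasDerivAt_ck κ 0).continuousAt.tendsto).mono_left nhdsWithin_le_nhds
  have hWlim : Filter.Tendsto W (nhdsWithin 0 (Set.Ioi 0)) (nhds 0) := by
    have := hlim.sub (hh0.mul hck0)
    simpa using this
  have hWnonpos : ∀ t ∈ Set.Ioo 0 T, W t ≤ 0 := by
    intro t ht
    refine ge_of_tendsto hWlim ?_
    filter_upwards [Ioo_mem_nhdsGT ht.1] with a ha
    exact hWanti ⟨ha.1, ha.2.trans ht.2⟩ ht ha.2.le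
  have hq : ∀ t ∈ Set.Ioo 0 T, HasDerivAt (fun t => h t / sk κ t)
      ((deriv h t * sk κ t - h t * ck κ t) / (sk κ t)^2) t := fun t ht =>
    (hdh t ht).div (hasDerivAt_sk κ t) (sk_pos hTκ ht).ne'
  apply antitoneOn_of_deriv_nonpos (convex_Ioo 0 T)
  · exact fun t ht => (hq t ht).continuousAt.continuousWithinAt
  · rw [interior_Ioo]
    exact fun t ht => ((hq t ht).differentiableAt).differentiableWithinAt
  · intro t ht
    rw [interior_Ioo] at ht
    rw [(hq t ht).deriv]
    exact div_nonpos_of_nonpos_of_nonneg (hWnonpos t ht) (sq_nonneg _)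
end

section
/- Let N ∈ ℝ with N < 0 or N > n, let ψ : (0,T) → ℝ be C², and let a : (0,T) → ℝ be positive and C² satisfying the Bishop inequality n·(a^(1/n))''(t) ≤ −R(t)·a^(1/n)(t) for a continuous function R : (0,T) → ℝ. Define h(t) := e^(−ψ(t)/N) · a(t)^(1/N). If R(t) + ψ''(t) − ψ'(t)²/(N−n) ≥ c for some c ∈ ℝ and all t ∈ (0,T), then N·h''(t) + c·h(t) ≤ 0 on (0,T). -/
open Real Set

private lemma key_ineq (n N p v : ℝ) (hn : 0 < n) (hN : N < 0 ∨ n < N) :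
    p ^ 2 / N - 2 * p * v / N + (1 / N - 1 / n) * v ^ 2 ≤ p ^ 2 / (N - n) := by
  have hN0 : N ≠ 0 := by rcases hN with h | h <;> nlinarith
  have hNn : N - n ≠ 0 := by rcases hN with h | h <;> nlinarith
  have hprod : 0 < n * (N * (N - n)) := by
    rcases hN with h | h
    · have : 0 < N * (N - n) := mul_pos_of_neg_of_neg (by linarith) (by linarith)
      positivity
    · have : 0 < N * (N - n) := mul_pos (by linarith) (by linarith)
      positivity
  have key : p ^ 2 / (N - n) - (p ^ 2 / N - 2 * p * v / N + (1 / N - 1 / n) * v ^ 2)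
      = (n * p + (N - n) * v) ^ 2 / (n * (N * (N - n))) := by
    field_simp
    ring
  have h2 : 0 ≤ (n * p + (N - n) * v) ^ 2 / (n * (N * (N - n))) :=
    div_nonneg (sq_nonneg _) hprod.le
  linarith [key ▸ h2]

set_option maxHeartbeats 1000000 in
/-- Scalar weighted Bishop comparison (Proposition 3.2 abstraction). -/
theorem stmt_4 (n : ℕ) (hn : 0 < n) (N : ℝ) (hN : N < 0 ∨ (n : ℝ) < N)
    (T c : ℝ) (ψ a R : ℝ → ℝ)
    (hψ : ContDiffOn ℝ 2 ψ (Set.Ioo 0 T))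
    (ha_pos : ∀ t ∈ Set.Ioo 0 T, 0 < a t)
    (ha : ContDiffOn ℝ 2 a (Set.Ioo 0 T))
    (hR : ContinuousOn R (Set.Ioo 0 T))
    (hBishop : ∀ t ∈ Set.Ioo 0 T,
      (n : ℝ) * deriv (deriv (fun s => a s ^ (1 / (n : ℝ)))) t ≤
        -R t * a t ^ (1 / (n : ℝ)))
    (hRicN : ∀ t ∈ Set.Ioo 0 T,
      c ≤ R t + deriv (deriv ψ) t - (deriv ψ t) ^ 2 / (N - n)) :
    ∀ t ∈ Set.Ioo 0 T,
      N * deriv (deriv (fun s => Real.exp (-ψ s / N) * a s ^ (1 / N))) t +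
        c * (Real.exp (-ψ t / N) * a t ^ (1 / N)) ≤ 0 := by
  intro t ht
  have hopen : IsOpen (Set.Ioo (0 : ℝ) T) := isOpen_Ioo
  have hnhds : Set.Ioo (0 : ℝ) T ∈ nhds t := hopen.mem_nhds ht
  have hnR : (0 : ℝ) < n := by exact_mod_cast hn
  have hN0 : N ≠ 0 := by rcases hN with h | h <;> nlinarith
  have hA : 0 < a t := ha_pos t ht
  -- unpack C² structure of ψ
  have h2eq : (2 : WithTop ℕ∞) = 1 + 1 := by norm_num
  rw [h2eq, contDiffOn_succ_iff_deriv_of_isOpen hopen] at hψ ha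
  have hψd : ∀ s ∈ Set.Ioo (0 : ℝ) T, HasDerivAt ψ (deriv ψ s) s := fun s hs =>
    (hψ.1.differentiableAt (hopen.mem_nhds hs)).hasDerivAt
  have had : ∀ s ∈ Set.Ioo (0 : ℝ) T, HasDerivAt a (deriv a s) s := fun s hs =>
    (ha.1.differentiableAt (hopen.mem_nhds hs)).hasDerivAt
  have hψ'd : HasDerivAt (deriv ψ) (deriv (deriv ψ) t) t :=
    (((hψ.2.2.differentiableOn one_ne_zero).differentiableAt hnhds)).hasDerivAt
  have ha'd : HasDerivAt (deriv a) (deriv (deriv a) t) t :=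
    (((ha.2.2.differentiableOn one_ne_zero).differentiableAt hnhds)).hasDerivAt
  -- abbreviations
  set A := a t with hAdef
  set A' := deriv a t with hA'def
  set A'' := deriv (deriv a) t with hA''def
  set P' := deriv ψ t with hP'def
  set P'' := deriv (deriv ψ) t with hP''def
  have hAne : A ≠ 0 := hA.ne'
  ---------------------------------------------------------------
  -- Step 1: Bishop inequality in terms of a
  ---------------------------------------------------------------
  have hb1 : ∀ s ∈ Set.Ioo (0 : ℝ) T,
      HasDerivAt (fun s => a s ^ (1 / (n : ℝ)))
        (deriv a s * (1 / (n : ℝ)) * a s ^ (1 / (n : ℝ) - 1)) s := fun s hs =>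
    (had s hs).rpow_const (Or.inl (ha_pos s hs).ne')
  have hbev : deriv (fun s => a s ^ (1 / (n : ℝ)))
      =ᶠ[nhds t] fun s => deriv a s * (1 / (n : ℝ)) * a s ^ (1 / (n : ℝ) - 1) :=
    Filter.eventuallyEq_of_mem hnhds fun s hs => (hb1 s hs).deriv
  have hb2 : HasDerivAt (fun s => deriv a s * (1 / (n : ℝ)) * a s ^ (1 / (n : ℝ) - 1))
      (A'' * (1 / (n : ℝ)) * A ^ (1 / (n : ℝ) - 1) +
        A' * (1 / (n : ℝ)) * (A' * (1 / (n : ℝ) - 1) * A ^ (1 / (n : ℝ) - 1 - 1))) t :=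
    (ha'd.mul_const (1 / (n : ℝ))).mul ((had t ht).rpow_const (Or.inl hAne))
  have hbderiv : deriv (deriv (fun s => a s ^ (1 / (n : ℝ)))) t =
      A'' * (1 / (n : ℝ)) * A ^ (1 / (n : ℝ) - 1) +
        A' * (1 / (n : ℝ)) * (A' * (1 / (n : ℝ) - 1) * A ^ (1 / (n : ℝ) - 1 - 1)) := by
    rw [hbev.deriv_eq, hb2.deriv]
  have hY : (0 : ℝ) < A ^ (1 / (n : ℝ)) := rpow_pos_of_pos hA _
  have hYe1 : A ^ (1 / (n : ℝ) - 1) = A ^ (1 / (n : ℝ)) / A := by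
    rw [rpow_sub hA, rpow_one]
  have hYe2 : A ^ (1 / (n : ℝ) - 1 - 1) = A ^ (1 / (n : ℝ)) / A / A := by
    rw [rpow_sub hA, rpow_sub hA, rpow_one]
  have hBishop' : A'' / A + (1 / (n : ℝ) - 1) * (A' / A) ^ 2 ≤ -R t := by
    have hb := hBishop t ht
    rw [hbderiv, hYe1, hYe2] at hb
    have e1 : (n : ℝ) * (A'' * (1 / (n : ℝ)) * (A ^ (1 / (n : ℝ)) / A) +
        A' * (1 / (n : ℝ)) * (A' * (1 / (n : ℝ) - 1) * (A ^ (1 / (n : ℝ)) / A / A))) =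
        A ^ (1 / (n : ℝ)) * (A'' / A + (1 / (n : ℝ) - 1) * (A' / A) ^ 2) := by
      field_simp
    have e2 : -R t * A ^ (1 / (n : ℝ)) = A ^ (1 / (n : ℝ)) * (-R t) := by ring
    rw [e1, e2] at hb
    exact (mul_le_mul_iff_of_pos_left hY).mp hb
  ---------------------------------------------------------------
  -- Step 2: second derivative of h
  ---------------------------------------------------------------
  set X := A ^ (1 / N) with hXdef
  have hX : (0 : ℝ) < X := rpow_pos_of_pos hA _
  set E := Real.exp (-ψ t / N) with hEdef
  have hE : (0 : ℝ) < E := Real.exp_pos _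
  set W : ℝ := -P'' + P' ^ 2 / N - 2 * P' * A' / (N * A) + A'' / A +
      (1 / N - 1) * (A' / A) ^ 2 with hWdef
  have hh1 : ∀ s ∈ Set.Ioo (0 : ℝ) T,
      HasDerivAt (fun s => Real.exp (-ψ s / N) * a s ^ (1 / N))
        (Real.exp (-ψ s / N) * (-deriv ψ s / N) * a s ^ (1 / N) +
          Real.exp (-ψ s / N) * (deriv a s * (1 / N) * a s ^ (1 / N - 1))) s := by
    intro s hs
    have h1 : HasDerivAt (fun s => Real.exp (-ψ s / N))
        (Real.exp (-ψ s / N) * (-deriv ψ s / N)) s := ((hψd s hs).neg.div_const N).exp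
    have h2 : HasDerivAt (fun s => a s ^ (1 / N))
        (deriv a s * (1 / N) * a s ^ (1 / N - 1)) s :=
      (had s hs).rpow_const (Or.inl (ha_pos s hs).ne')
    exact h1.mul h2
  have hhev : deriv (fun s => Real.exp (-ψ s / N) * a s ^ (1 / N))
      =ᶠ[nhds t] fun s =>
        Real.exp (-ψ s / N) * (-deriv ψ s / N) * a s ^ (1 / N) +
          Real.exp (-ψ s / N) * (deriv a s * (1 / N) * a s ^ (1 / N - 1)) :=
    Filter.eventuallyEq_of_mem hnhds fun s hs => (hh1 s hs).deriv
  have hXe1 : A ^ (1 / N - 1) = X / A := by rw [hXdef, rpow_sub hA, rpow_one]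
  have hXe2 : A ^ (1 / N - 1 - 1) = X / A / A := by
    rw [hXdef, rpow_sub hA, rpow_sub hA, rpow_one]
  have hEd : HasDerivAt (fun s => Real.exp (-ψ s / N)) (E * (-P' / N)) t :=
    ((hψd t ht).neg.div_const N).exp
  have hPPd : HasDerivAt (fun s => -deriv ψ s / N) (-P'' / N) t := hψ'd.neg.div_const N
  have hXd : HasDerivAt (fun s => a s ^ (1 / N)) (A' * (1 / N) * A ^ (1 / N - 1)) t :=
    (had t ht).rpow_const (Or.inl hAne)
  have hX1d : HasDerivAt (fun s => a s ^ (1 / N - 1))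
      (A' * (1 / N - 1) * A ^ (1 / N - 1 - 1)) t :=
    (had t ht).rpow_const (Or.inl hAne)
  have hsecond : HasDerivAt (fun s =>
      Real.exp (-ψ s / N) * (-deriv ψ s / N) * a s ^ (1 / N) +
        Real.exp (-ψ s / N) * (deriv a s * (1 / N) * a s ^ (1 / N - 1)))
      (E * X * W / N) t := by
    have hmain := ((hEd.mul hPPd).mul hXd).add
      (hEd.mul ((ha'd.mul_const (1 / N)).mul hX1d))
    refine hmain.congr_deriv ?_
    simp only [Pi.mul_apply, ← hAdef, ← hA'def, ← hP'def, ← hEdef]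
    rw [hXe1, hXe2, hWdef, hXdef]
    field_simp
    ring
  have hderiv2 : deriv (deriv (fun s => Real.exp (-ψ s / N) * a s ^ (1 / N))) t =
      E * X * W / N := by
    rw [hhev.deriv_eq, hsecond.deriv]
  ---------------------------------------------------------------
  -- Step 3: conclude
  ---------------------------------------------------------------
  rw [hderiv2]
  clear_value W
  have hkey := key_ineq (n : ℝ) N P' (A' / A) hnR hN
  have hRic : c ≤ R t + P'' - P' ^ 2 / (N - (n : ℝ)) := hRicN t ht
  have hWle : W + c ≤ 0 := by
    have h1 : W ≤ -P'' - R t + P' ^ 2 / N - 2 * P' * A' / (N * A) +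
        (1 / N - 1 / (n : ℝ)) * (A' / A) ^ 2 := by
      rw [hWdef]; linarith [hBishop']
    have h2 : 2 * P' * A' / (N * A) = 2 * P' * (A' / A) / N := by
      field_simp
    rw [h2] at h1
    have h3 : W ≤ -P'' - R t + P' ^ 2 / (N - (n : ℝ)) := by linarith
    linarith [h3, hRic]
  have : N * (E * X * W / N) + c * (E * X) = E * X * (W + c) := by
    field_simp
  rw [this]
  exact mul_nonpos_of_nonneg_of_nonpos (by positivity) hWle
end

section
/- Let c ∈ ℝ and let f : (0,∞) → ℝ be positive and C² such that t ↦ log(f(t)·e^{ct²/2}) is concave on (0,∞) and lim_{t→0⁺} f(t) = 0. Then there exists δ > 0 such that for every ε ∈ (0,δ), setting C₀ := −log(f(ε)e^{cε²/2})/ε, one has f(t)·e^{ct²/2} ≤ e^{C₀ t} for all t > 4ε. -/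
/-!
Write `g t = log (f t * exp (c * t ^ 2 / 2))`. Since `f t * exp (c * t ^ 2 / 2) → 0` as `t → 0⁺`,
`g ≤ 0` on some interval `(0, δ)`. For `ε < δ / 2` and `t > 2ε`, concavity compares the secant
slopes of `g` on `[ε, 2ε]` and `[2ε, t]`; as `g ε` and `g (2ε)` are nonpositive, this leaves
`g t ≤ -(g ε / ε) * t`, and exponentiating gives the bound.
-/

open Real Set Filter Topology

theorem Real.eventually_log_nonpos_of_tendsto_zero {α : Type*} {l : Filter α} {F : α → ℝ}
    (hF : Tendsto F l (𝓝 0)) : ∀ᶠ x in l, log (F x) ≤ 0 := by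
  have habs : Tendsto (fun x => |F x|) l (𝓝 0) := by simpa using hF.abs
  filter_upwards [habs.eventually_le_const zero_lt_one] with x hx
  rw [← log_abs]
  exact log_nonpos (abs_nonneg _) hx

theorem ConcaveOn.le_neg_div_mul_of_nonpos {s : Set ℝ} {g : ℝ → ℝ} (hg : ConcaveOn ℝ s g)
    {ε t : ℝ} (hεs : ε ∈ s) (hts : t ∈ s) (hε : 0 < ε) (ht : 2 * ε < t)
    (hgε : g ε ≤ 0) (hg2ε : g (2 * ε) ≤ 0) : g t ≤ -g ε / ε * t := by
  have hslope := hg.slope_anti_adjacent hεs hts (by linarith : ε < 2 * ε) ht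
  rw [show 2 * ε - ε = ε by ring, div_le_div_iff₀ (by linarith) hε] at hslope
  rw [div_mul_eq_mul_div, le_div_iff₀ hε]
  nlinarith [mul_nonpos_of_nonpos_of_nonneg hg2ε (by linarith : 0 ≤ t - ε)]

theorem stmt_10_general (c : ℝ) (f : ℝ → ℝ)
    (hf_pos : ∀ t, 0 < t → 0 < f t)
    (hconc : ConcaveOn ℝ (Set.Ioi 0)
      (fun t => Real.log (f t * Real.exp (c * t ^ 2 / 2))))
    (hlim : Filter.Tendsto f (nhdsWithin 0 (Set.Ioi 0)) (nhds 0)) :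
    ∃ δ > (0:ℝ), ∀ ε ∈ Set.Ioo (0:ℝ) δ, ∀ t, 4 * ε < t →
      f t * Real.exp (c * t ^ 2 / 2) ≤
        Real.exp ((-Real.log (f ε * Real.exp (c * ε ^ 2 / 2)) / ε) * t) := by
  have hsmall : Tendsto (fun s => f s * exp (c * s ^ 2 / 2)) (𝓝[>] 0) (𝓝 0) := by
    have hexp : Tendsto (fun s : ℝ => exp (c * s ^ 2 / 2)) (𝓝[>] 0) (𝓝 1) := by
      simpa using ((by fun_prop : Continuous fun s : ℝ => exp (c * s ^ 2 / 2)).tendsto 0).mono_left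
        nhdsWithin_le_nhds
    simpa using hlim.mul hexp
  obtain ⟨δ, hδ, hnonpos⟩ := mem_nhdsGT_iff_exists_Ioo_subset.1
    (eventually_log_nonpos_of_tendsto_zero hsmall)
  refine ⟨δ / 2, half_pos hδ, ?_⟩
  rintro ε ⟨hε, hεδ⟩ t ht
  have hbound := hconc.le_neg_div_mul_of_nonpos (mem_Ioi.2 hε) (mem_Ioi.2 (by linarith)) hε
    (by linarith) (hnonpos ⟨hε, by linarith⟩) (hnonpos ⟨by linarith, by linarith⟩)
  calc f t * exp (c * t ^ 2 / 2)
      = exp (log (f t * exp (c * t ^ 2 / 2))) :=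
        (exp_log (mul_pos (hf_pos t (by linarith)) (exp_pos _))).symm
    _ ≤ _ := exp_le_exp.2 hbound

/-- Linear exponential bound from concavity of `log(f e^{ct²/2})` (Sturm-type
volume growth step). -/
theorem stmt_10 (c : ℝ) (f : ℝ → ℝ)
    (hf_pos : ∀ t, 0 < t → 0 < f t)
    (hf_C2 : ContDiffOn ℝ 2 f (Set.Ioi 0))
    (hconc : ConcaveOn ℝ (Set.Ioi 0)
      (fun t => Real.log (f t * Real.exp (c * t ^ 2 / 2))))
    (hlim : Filter.Tendsto f (nhdsWithin 0 (Set.Ioi 0)) (nhds 0)) :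
    ∃ δ > (0:ℝ), ∀ ε ∈ Set.Ioo (0:ℝ) δ, ∀ t, 4 * ε < t →
      f t * Real.exp (c * t ^ 2 / 2) ≤
        Real.exp ((-Real.log (f ε * Real.exp (c * ε ^ 2 / 2)) / ε) * t) :=
  stmt_10_general c f hf_pos hconc hlim
end

section
/- Let c ≥ 0 and let Y : [0,T) → ℝⁿ be a C² vector-valued function with Y(0) = 0, Y(t) ≠ 0 for t ∈ (0,T), satisfying ⟨Y''(t), Y(t)⟩ ≥ c·|Y(t)|² for all t ∈ (0,T) (with respect to the standard inner product). Then t ↦ |Y(t)|/s_{−c}(t) is non-decreasing on (0,T), where s_{−c}(t) = sinh(√c t)/√c for c > 0 and s_0(t) = t. -/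
open Real Set Filter Topology
open scoped InnerProductSpace

section ComparisonFunction

variable {c : ℝ}

lemma sk_neg_of_nonneg (hc : 0 ≤ c) (t : ℝ) :
    sk (-c) t = if c = 0 then t else sinh (√c * t) / √c := by
  rcases hc.eq_or_lt with rfl | hc
  · simp [sk]
  · simp [sk, hc.ne', not_lt.2 (neg_nonpos.2 hc.le)]

lemma sk_neg_zero (hc : 0 ≤ c) : sk (-c) 0 = 0 := by
  rw [sk_neg_of_nonneg hc]; split_ifs <;> simp

lemma sk_neg_pos (hc : 0 ≤ c) {t : ℝ} (ht : 0 < t) : 0 < sk (-c) t := by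
  rw [sk_neg_of_nonneg hc]
  split_ifs with h
  · exact ht
  · have hs : 0 < √c := sqrt_pos.2 (hc.lt_of_ne' h)
    exact div_pos (sinh_pos_iff.2 (mul_pos hs ht)) hs

lemma hasDerivAt_sk_neg (hc : 0 ≤ c) (t : ℝ) :
    HasDerivAt (sk (-c)) (cosh (√c * t)) t := by
  have h : sk (-c) = fun u => if c = 0 then u else sinh (√c * u) / √c :=
    funext (sk_neg_of_nonneg hc)
  rcases eq_or_ne c 0 with rfl | hc0
  · rw [h]
    simpa using hasDerivAt_id' t
  · have hs : √c ≠ 0 := sqrt_ne_zero'.2 (hc.lt_of_ne' hc0)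
    simp only [h, hc0, if_false]
    refine ((((hasDerivAt_id' t).const_mul √c).sinh).div_const √c).congr_deriv ?_
    field_simp

lemma hasDerivAt_cosh_sqrt_mul (hc : 0 ≤ c) (t : ℝ) :
    HasDerivAt (fun u => cosh (√c * u)) (c * sk (-c) t) t := by
  convert ((hasDerivAt_id' t).const_mul √c).cosh using 1
  rw [sk_neg_of_nonneg hc]
  rcases eq_or_ne c 0 with rfl | hc0
  · simp
  · have hs : √c ≠ 0 := sqrt_ne_zero'.2 (hc.lt_of_ne' hc0)
    rw [if_neg hc0]
    field_simp
    linear_combination (-sinh (√c * t)) * mul_self_sqrt hc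

end ComparisonFunction

section SturmComparison

variable {f f' f'' s s' : ℝ → ℝ} {D : Set ℝ} {a b c : ℝ}

lemma monotoneOn_of_forall_hasDerivAt_nonneg {g g' : ℝ → ℝ} (hD : Convex ℝ D)
    (hg : ∀ t ∈ D, HasDerivAt g (g' t) t) (hg' : ∀ t ∈ D, 0 ≤ g' t) : MonotoneOn g D :=
  monotoneOn_of_hasDerivWithinAt_nonneg hD (fun t ht => (hg t ht).continuousAt.continuousWithinAt)
    (fun t ht => (hg t (interior_subset ht)).hasDerivWithinAt)
    (fun t ht => hg' t (interior_subset ht))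

lemma monotoneOn_wronskian (hD : Convex ℝ D) (hf : ∀ t ∈ D, HasDerivAt f (f' t) t)
    (hf' : ∀ t ∈ D, HasDerivAt f' (f'' t) t) (hs : ∀ t ∈ D, HasDerivAt s (s' t) t)
    (hs' : ∀ t ∈ D, HasDerivAt s' (c * s t) t) (hs_nonneg : ∀ t ∈ D, 0 ≤ s t)
    (hf'' : ∀ t ∈ D, c * f t ≤ f'' t) :
    MonotoneOn (fun t => f' t * s t - f t * s' t) D := by
  refine monotoneOn_of_forall_hasDerivAt_nonneg hD
    (fun t ht => ((hf' t ht).mul (hs t ht)).sub ((hf t ht).mul (hs' t ht))) fun t ht => ?_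
  linear_combination mul_nonneg (sub_nonneg.2 (hf'' t ht)) (hs_nonneg t ht)

lemma monotoneOn_div_of_wronskian_nonneg (hD : Convex ℝ D) (hf : ∀ t ∈ D, HasDerivAt f (f' t) t)
    (hs : ∀ t ∈ D, HasDerivAt s (s' t) t) (hs0 : ∀ t ∈ D, s t ≠ 0)
    (hW : ∀ t ∈ D, 0 ≤ f' t * s t - f t * s' t) :
    MonotoneOn (fun t => f t / s t) D :=
  monotoneOn_of_forall_hasDerivAt_nonneg hD (fun t ht => (hf t ht).div (hs t ht) (hs0 t ht))
    fun t ht => div_nonneg (hW t ht) (sq_nonneg _)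

lemma MonotoneOn.nonneg_of_tendsto_nhdsGT {g : ℝ → ℝ} (hg : MonotoneOn g (Ioo a b))
    (hlim : Tendsto g (𝓝[>] a) (𝓝 0)) {t : ℝ} (ht : t ∈ Ioo a b) : 0 ≤ g t := by
  refine le_of_tendsto hlim ?_
  filter_upwards [Ioo_mem_nhdsGT ht.1] with u hu
  exact hg ⟨hu.1, hu.2.trans ht.2⟩ ht hu.2.le

theorem monotoneOn_div_of_sturm_comparison (hf : ∀ t ∈ Ioo a b, HasDerivAt f (f' t) t)
    (hf' : ∀ t ∈ Ioo a b, HasDerivAt f' (f'' t) t) (hs : ∀ t ∈ Ioo a b, HasDerivAt s (s' t) t)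
    (hs' : ∀ t ∈ Ioo a b, HasDerivAt s' (c * s t) t) (hs_pos : ∀ t ∈ Ioo a b, 0 < s t)
    (hf'' : ∀ t ∈ Ioo a b, c * f t ≤ f'' t)
    (hf_lim : Tendsto f (𝓝[>] a) (𝓝 0)) (hf'_bdd : IsBoundedUnder (· ≤ ·) (𝓝[>] a) (norm ∘ f'))
    (hs_lim : Tendsto s (𝓝[>] a) (𝓝 0)) (hs'_bdd : IsBoundedUnder (· ≤ ·) (𝓝[>] a) (norm ∘ s')) :
    MonotoneOn (fun t => f t / s t) (Ioo a b) := by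
  have hW_lim : Tendsto (fun t => f' t * s t - f t * s' t) (𝓝[>] a) (𝓝 0) := by
    simpa using (isBoundedUnder_le_mul_tendsto_zero hf'_bdd hs_lim).sub
      (hf_lim.zero_mul_isBoundedUnder_le hs'_bdd)
  have hW_mono := monotoneOn_wronskian (convex_Ioo a b) hf hf' hs hs'
    (fun t ht => (hs_pos t ht).le) hf''
  exact monotoneOn_div_of_wronskian_nonneg (convex_Ioo a b) hf hs (fun t ht => (hs_pos t ht).ne')
    fun t ht => hW_mono.nonneg_of_tendsto_nhdsGT hW_lim ht

end SturmComparison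

section NormDerivative

variable {E : Type*} [NormedAddCommGroup E] [InnerProductSpace ℝ E]

lemma abs_inner_div_norm_le (v y : E) : |⟪v, y⟫_ℝ / ‖y‖| ≤ ‖v‖ := by
  rw [abs_div, abs_norm]
  exact div_le_of_le_mul₀ (norm_nonneg _) (norm_nonneg _) (abs_real_inner_le_norm v y)

lemma mul_norm_le_of_mul_norm_sq_le_inner {c : ℝ} {v w y : E} (h : c * ‖y‖ ^ 2 ≤ ⟪w, y⟫_ℝ) :
    c * ‖y‖ ≤ (⟪w, y⟫_ℝ + ‖v‖ ^ 2 - (⟪v, y⟫_ℝ / ‖y‖) ^ 2) / ‖y‖ := by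
  rcases eq_or_ne y 0 with rfl | hy
  · simp
  have hy : 0 < ‖y‖ := norm_pos_iff.2 hy
  have hCS : (⟪v, y⟫_ℝ / ‖y‖) ^ 2 ≤ ‖v‖ ^ 2 := sq_le_sq.2 <| by
    simpa using abs_inner_div_norm_le v y
  rw [le_div_iff₀ hy]
  nlinarith

variable {Y Y' : ℝ → E} {y' y'' : E} {t : ℝ}

lemma HasDerivAt.norm (hY : HasDerivAt Y y' t) (h0 : Y t ≠ 0) :
    HasDerivAt (fun u => ‖Y u‖) (⟪y', Y t⟫_ℝ / ‖Y t‖) t := by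
  have hn : ‖Y t‖ ≠ 0 := norm_ne_zero_iff.2 h0
  convert hY.norm_sq.sqrt (pow_ne_zero 2 hn) using 1
  · simp [sqrt_sq (norm_nonneg _)]
  · rw [sqrt_sq (norm_nonneg _), real_inner_comm]
    field_simp

lemma HasDerivAt.inner_div_norm (hY : HasDerivAt Y (Y' t) t) (hY' : HasDerivAt Y' y'' t)
    (h0 : Y t ≠ 0) :
    HasDerivAt (fun u => ⟪Y' u, Y u⟫_ℝ / ‖Y u‖)
      ((⟪y'', Y t⟫_ℝ + ‖Y' t‖ ^ 2 - (⟪Y' t, Y t⟫_ℝ / ‖Y t‖) ^ 2) / ‖Y t‖) t := by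
  have hn : ‖Y t‖ ≠ 0 := norm_ne_zero_iff.2 h0
  refine ((hY'.inner ℝ hY).div (hY.norm h0) hn).congr_deriv ?_
  rw [real_inner_self_eq_norm_sq]
  field_simp
  ring

end NormDerivative

lemma ContDiffOn.isBoundedUnder_norm_deriv_nhdsGT {E : Type*} [NormedAddCommGroup E]
    [NormedSpace ℝ E] {Y : ℝ → E} {a b : ℝ} (hY : ContDiffOn ℝ 1 Y (Ico a b)) (hab : a < b) :
    IsBoundedUnder (· ≤ ·) (𝓝[>] a) (fun t => ‖deriv Y t‖) := by
  have hcont : ContinuousWithinAt (derivWithin Y (Ico a b)) (Ioi a) a :=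
    (hY.continuousOn_derivWithin (uniqueDiffOn_Ico a b) le_rfl a
      ⟨le_rfl, hab⟩).mono_of_mem_nhdsWithin (Ico_mem_nhdsGT hab)
  refine hcont.tendsto.norm.isBoundedUnder_le.mono_le ?_
  filter_upwards [Ioo_mem_nhdsGT hab] with t ht
  rw [derivWithin_of_mem_nhds (mem_of_superset (isOpen_Ioo.mem_nhds ht) Ioo_subset_Ico_self)]

/-- Jacobi field norm comparison: if `⟨Y'', Y⟩ ≥ c|Y|²` then `|Y|/s_{−c}` is
non-decreasing. -/
theorem stmt_12 (n : ℕ) (c T : ℝ) (hc : 0 ≤ c) (hT : 0 < T)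
    (Y : ℝ → EuclideanSpace ℝ (Fin n))
    (hY_C2 : ContDiffOn ℝ 2 Y (Set.Ico 0 T))
    (hY0 : Y 0 = 0) (hYne : ∀ t ∈ Set.Ioo 0 T, Y t ≠ 0)
    (hineq : ∀ t ∈ Set.Ioo 0 T,
      c * ‖Y t‖ ^ 2 ≤ inner ℝ (deriv (deriv Y) t) (Y t)) :
    MonotoneOn (fun t => ‖Y t‖ / sk (-c) t) (Set.Ioo 0 T) := by
  have hC2 : ContDiffOn ℝ 2 Y (Ioo 0 T) := hY_C2.mono Ioo_subset_Ico_self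
  have hY' : ∀ t ∈ Ioo 0 T, HasDerivAt Y (deriv Y t) t := fun t ht =>
    ((hC2.differentiableOn two_ne_zero t ht).differentiableAt (isOpen_Ioo.mem_nhds ht)).hasDerivAt
  have hY'' : ∀ t ∈ Ioo 0 T, HasDerivAt (deriv Y) (deriv (deriv Y) t) t := fun t ht =>
    (((hC2.deriv_of_isOpen isOpen_Ioo le_rfl).differentiableOn one_ne_zero t ht).differentiableAt
      (isOpen_Ioo.mem_nhds ht)).hasDerivAt
  have hY_lim : Tendsto Y (𝓝[>] 0) (𝓝 0) := hY0 ▸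
    ((hY_C2.continuousOn 0 ⟨le_rfl, hT⟩).mono_of_mem_nhdsWithin (Ico_mem_nhdsGT hT)).tendsto
  refine monotoneOn_div_of_sturm_comparison (f' := fun t => ⟪deriv Y t, Y t⟫_ℝ / ‖Y t‖)
    (fun t ht => (hY' t ht).norm (hYne t ht))
    (fun t ht => (hY' t ht).inner_div_norm (hY'' t ht) (hYne t ht))
    (fun t _ => hasDerivAt_sk_neg hc t) (fun t _ => hasDerivAt_cosh_sqrt_mul hc t)
    (fun t ht => sk_neg_pos hc ht.1)
    (fun t ht => mul_norm_le_of_mul_norm_sq_le_inner (hineq t ht))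
    (by simpa using hY_lim.norm) ?_ ?_ ?_
  · refine ((hY_C2.of_le one_le_two).isBoundedUnder_norm_deriv_nhdsGT hT).mono_le
      (Eventually.of_forall fun t => ?_)
    exact abs_inner_div_norm_le (deriv Y t) (Y t)
  · simpa [sk_neg_zero hc] using
      (hasDerivAt_sk_neg hc 0).continuousAt.tendsto.mono_left nhdsWithin_le_nhds
  · exact ((hasDerivAt_cosh_sqrt_mul hc 0).continuousAt.tendsto.mono_left
      nhdsWithin_le_nhds).norm.isBoundedUnder_le
end

section
/- Let c ∈ ℝ, N > 0, and suppose for μ-a.e. v in a measure space (V, μ) we are given a positive measurable function h_v : (0, T) → ℝ such that h_v/s_{c/N} is non-increasing on (0, T), where T > 0 satisfies T ≤ π√(N/c) if c > 0. Then for all 0 < r ≤ R ≤ 1, (∫_V ∫₀^{rT} h_v(t)^N dt dμ(v)) / (∫_V ∫₀^{RT} h_v(t)^N dt dμ(v)) ≥ (∫₀^{rT} s_{c/N}(t)^N dt) / (∫₀^{RT} s_{c/N}(t)^N dt), provided all integrals are finite and positive. -/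
/-!
Write `f = h_v ^ N` and `g = s_{c/N} ^ N`. Since `f / g` is non-increasing, the constant
`C = f a / g a` satisfies `C g ≤ f` on `(0, a)` and `f ≤ C g` on `(a, b)`; integrating both and
comparing gives Gromov's inequality `(∫₀^a g) (∫₀^b f) ≤ (∫₀^b g) (∫₀^a f)`. It survives
integration over the directions `v`, and dividing by the (positive) integrals over `(0, b)`
gives the volume ratio bound.
-/

open Real MeasureTheory Set

lemma sk_continuous (κ : ℝ) : Continuous (sk κ) := by
  unfold sk
  split_ifs <;> fun_prop

lemma sk_pos_s15 {κ t : ℝ} (ht : 0 < t) (hκ : 0 < κ → √κ * t < π) : 0 < sk κ t := by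
  unfold sk
  split_ifs with hpos hzero
  · exact div_pos (sin_pos_of_pos_of_lt_pi (by positivity) (hκ hpos)) (sqrt_pos.2 hpos)
  · exact ht
  · have hneg : 0 < √(-κ) := sqrt_pos.2 (neg_pos.2 (lt_of_le_of_ne (not_lt.1 hpos) hzero))
    exact div_pos (sinh_pos_iff.2 (mul_pos hneg ht)) hneg

lemma sk_div_pos_of_mem_Ioo {c N T t : ℝ} (hN : 0 < N) (hTc : 0 < c → T ≤ π * √(N / c))
    (ht : t ∈ Ioo 0 T) : 0 < sk (c / N) t :=
  sk_pos_s15 ht.1 fun hκ => by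
    have hc : 0 < c := (div_pos_iff_of_pos_right hN).1 hκ
    calc √(c / N) * t < √(c / N) * T := mul_lt_mul_of_pos_left ht.2 (sqrt_pos.2 hκ)
      _ ≤ √(c / N) * (π * √(N / c)) := mul_le_mul_of_nonneg_left (hTc hc) (sqrt_nonneg _)
      _ = π * √(c / N * (N / c)) := by rw [sqrt_mul hκ.le]; ring
      _ = π := by rw [show c / N * (N / c) = 1 by field_simp, sqrt_one, mul_one]

lemma antitoneOn_rpow_div {φ ψ : ℝ → ℝ} {s : Set ℝ} {N : ℝ} (hN : 0 ≤ N)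
    (hφ : ∀ t ∈ s, 0 ≤ φ t) (hψ : ∀ t ∈ s, 0 ≤ ψ t)
    (hanti : AntitoneOn (fun t => φ t / ψ t) s) :
    AntitoneOn (fun t => φ t ^ N / ψ t ^ N) s := by
  intro x hx y hy hxy
  simp only [← div_rpow (hφ _ hx) (hψ _ hx), ← div_rpow (hφ _ hy) (hψ _ hy)]
  exact rpow_le_rpow (div_nonneg (hφ y hy) (hψ y hy)) (hanti hx hy hxy) hN

lemma mul_integral_le_mul_integral_of_le_const_mul {f g : ℝ → ℝ} {x₀ a b C : ℝ}
    (hx₀a : x₀ ≤ a) (hab : a ≤ b)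
    (hf : IntervalIntegrable f volume x₀ b) (hg : IntervalIntegrable g volume x₀ b)
    (hg_nonneg : ∀ t ∈ Ioo x₀ b, 0 ≤ g t)
    (hleft : ∀ t ∈ Ioo x₀ a, C * g t ≤ f t) (hright : ∀ t ∈ Ioo a b, f t ≤ C * g t) :
    (∫ t in x₀..a, g t) * (∫ t in x₀..b, f t) ≤ (∫ t in x₀..b, g t) * (∫ t in x₀..a, f t) := by
  have ha : a ∈ uIcc x₀ b := mem_uIcc_of_le hx₀a hab
  have hsub₁ : uIcc x₀ a ⊆ uIcc x₀ b := uIcc_subset_uIcc left_mem_uIcc ha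
  have hsub₂ : uIcc a b ⊆ uIcc x₀ b := uIcc_subset_uIcc ha right_mem_uIcc
  rw [← intervalIntegral.integral_add_adjacent_intervals (hf.mono_set hsub₁) (hf.mono_set hsub₂),
    ← intervalIntegral.integral_add_adjacent_intervals (hg.mono_set hsub₁) (hg.mono_set hsub₂)]
  have hGa : 0 ≤ ∫ t in x₀..a, g t := by
    simpa using intervalIntegral.integral_mono_on_of_le_Ioo hx₀a intervalIntegrable_const
      (hg.mono_set hsub₁) fun t ht => hg_nonneg t ⟨ht.1, ht.2.trans_le hab⟩
  have hGab : 0 ≤ ∫ t in a..b, g t := by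
    simpa using intervalIntegral.integral_mono_on_of_le_Ioo hab intervalIntegrable_const
      (hg.mono_set hsub₂) fun t ht => hg_nonneg t ⟨hx₀a.trans_lt ht.1, ht.2⟩
  have hFa : C * ∫ t in x₀..a, g t ≤ ∫ t in x₀..a, f t := by
    rw [← intervalIntegral.integral_const_mul]
    exact intervalIntegral.integral_mono_on_of_le_Ioo hx₀a
      ((hg.mono_set hsub₁).const_mul C) (hf.mono_set hsub₁) hleft
  have hFab : ∫ t in a..b, f t ≤ C * ∫ t in a..b, g t := by
    rw [← intervalIntegral.integral_const_mul]
    exact intervalIntegral.integral_mono_on_of_le_Ioo hab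
      (hf.mono_set hsub₂) ((hg.mono_set hsub₂).const_mul C) hright
  nlinarith [mul_le_mul_of_nonneg_left hFab hGa, mul_le_mul_of_nonneg_right hFa hGab]

lemma mul_integral_le_mul_integral_of_antitoneOn_div {f g : ℝ → ℝ} {x₀ a b : ℝ}
    (hx₀a : x₀ < a) (hab : a ≤ b)
    (hf : IntervalIntegrable f volume x₀ b) (hg : IntervalIntegrable g volume x₀ b)
    (hg_pos : ∀ t ∈ Ioo x₀ b, 0 < g t) (hanti : AntitoneOn (fun t => f t / g t) (Ioo x₀ b)) :
    (∫ t in x₀..a, g t) * (∫ t in x₀..b, f t) ≤ (∫ t in x₀..b, g t) * (∫ t in x₀..a, f t) := by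
  rcases hab.eq_or_lt with rfl | hab
  · exact le_rfl
  have ha : a ∈ Ioo x₀ b := ⟨hx₀a, hab⟩
  refine mul_integral_le_mul_integral_of_le_const_mul (C := f a / g a) hx₀a.le hab.le hf hg
    (fun t ht => (hg_pos t ht).le) (fun t ht => ?_) (fun t ht => ?_)
  · have ht' : t ∈ Ioo x₀ b := ⟨ht.1, ht.2.trans hab⟩
    exact (le_div_iff₀ (hg_pos t ht')).1 (hanti ht' ha ht.2.le)
  · have ht' : t ∈ Ioo x₀ b := ⟨hx₀a.trans ht.1, ht.2⟩
    exact (div_le_iff₀ (hg_pos t ht')).1 (hanti ha ht' ht.1.le)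

lemma div_le_integral_div_integral {V : Type*} [MeasurableSpace V] {μ : Measure V}
    {A B : ℝ} {F G : V → ℝ} (hB : 0 < B) (hG : 0 < ∫ v, G v ∂μ)
    (hF_int : Integrable F μ) (hG_int : Integrable G μ) (h : ∀ᵐ v ∂μ, A * G v ≤ B * F v) :
    A / B ≤ (∫ v, F v ∂μ) / ∫ v, G v ∂μ := by
  have hmono := integral_mono_ae (hG_int.const_mul A) (hF_int.const_mul B) h
  rw [integral_const_mul, integral_const_mul] at hmono
  rw [div_le_div_iff₀ hB hG]
  linarith

/-- Integration step of the Bishop–Gromov theorem for SCLVs: fiberwise Gromov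
lemma followed by integration over the directions. -/
theorem stmt_15 {V : Type*} [MeasurableSpace V] (μ : Measure V)
    (c N T : ℝ) (hN : 0 < N) (hT : 0 < T)
    (hTc : 0 < c → T ≤ Real.pi * Real.sqrt (N / c))
    (h : V → ℝ → ℝ)
    (h_pos : ∀ᵐ v ∂μ, ∀ t ∈ Set.Ioo 0 T, 0 < h v t)
    (h_anti : ∀ᵐ v ∂μ, AntitoneOn (fun t => h v t / sk (c / N) t) (Set.Ioo 0 T))
    (h_int : ∀ r ∈ Set.Ioc (0:ℝ) 1,
      Integrable (fun v => ∫ t in (0:ℝ)..(r * T), h v t ^ N) μ)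
    (h_int_t : ∀ᵐ v ∂μ, ∀ r ∈ Set.Ioc (0:ℝ) 1,
      IntervalIntegrable (fun t => h v t ^ N) volume 0 (r * T))
    (h_den_pos : ∀ r ∈ Set.Ioc (0:ℝ) 1,
      0 < ∫ v, (∫ t in (0:ℝ)..(r * T), h v t ^ N) ∂μ)
    (h_model_pos : ∀ r ∈ Set.Ioc (0:ℝ) 1,
      0 < ∫ t in (0:ℝ)..(r * T), sk (c / N) t ^ N) :
    ∀ r R : ℝ, 0 < r → r ≤ R → R ≤ 1 →
      (∫ t in (0:ℝ)..(r * T), sk (c / N) t ^ N) /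
        (∫ t in (0:ℝ)..(R * T), sk (c / N) t ^ N) ≤
      (∫ v, (∫ t in (0:ℝ)..(r * T), h v t ^ N) ∂μ) /
        (∫ v, (∫ t in (0:ℝ)..(R * T), h v t ^ N) ∂μ) := by
  intro r R hr hrR hR1
  have hR : R ∈ Ioc (0:ℝ) 1 := ⟨hr.trans_le hrR, hR1⟩
  have hRT : R * T ≤ T := mul_le_of_le_one_left hT.le hR1
  have hsk_pos : ∀ t ∈ Ioo 0 (R * T), 0 < sk (c / N) t :=
    fun t ht => sk_div_pos_of_mem_Ioo hN hTc ⟨ht.1, ht.2.trans_le hRT⟩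
  refine div_le_integral_div_integral (h_model_pos R hR) (h_den_pos R hR)
    (h_int r ⟨hr, hrR.trans hR1⟩) (h_int R hR) ?_
  filter_upwards [h_pos, h_anti, h_int_t] with v hv_pos hv_anti hv_int
  have hratio : AntitoneOn (fun t => h v t ^ N / sk (c / N) t ^ N) (Ioo 0 (R * T)) :=
    (antitoneOn_rpow_div hN.le (fun t ht => (hv_pos t ht).le)
      (fun t ht => (sk_div_pos_of_mem_Ioo hN hTc ht).le) hv_anti).mono (Ioo_subset_Ioo_right hRT)
  exact mul_integral_le_mul_integral_of_antitoneOn_div (mul_pos hr hT)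
    (mul_le_mul_of_nonneg_right hrR hT.le) (hv_int R hR)
    (((sk_continuous _).rpow_const fun _ => Or.inr hN.le).intervalIntegrable _ _)
    (fun t ht => rpow_pos_of_pos (hsk_pos t ht) N) hratio
end
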